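/- Let X be a real Banach space and A ⊂ X × X* a self-cancelling set such that A^⊢ is monotone. Then the closure of A in the weak × weak-* topology of X × X* coincides with the closure of A in the strong × weak-* topology, and this common closure à is a maximal element (with respect to inclusion) of the family of self-cancelling subsets of X × X*. -/

import Mathlib

/-- A subset of `X × X*` is monotone if `⟨x - y, x* - y*⟩ ≥ 0` for all its pairs of points. -/
def IsMonotoneSet {X : Type*} [NormedAddCommGroup X] [NormedSpace ℝ X]
    (T : Set (X × (X →L[ℝ] ℝ))) : Prop :=
  ∀ p ∈ T, ∀ q ∈ T, 0 ≤ (p.2 - q.2) (p.1 - q.1)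

/-- `B^⊢ = {(y, y*) : ⟨x, y*⟩ + ⟨y, x*⟩ = 0 for all (x, x*) ∈ B}`. -/
def vdash {X : Type*} [NormedAddCommGroup X] [NormedSpace ℝ X]
    (B : Set (X × (X →L[ℝ] ℝ))) : Set (X × (X →L[ℝ] ℝ)) :=
  {q | ∀ p ∈ B, p.2 q.1 + q.2 p.1 = 0}

/-- `A ⊆ X × X*` is self-cancelling if it is a linear subspace of `X × X*` and the
duality product vanishes on it. -/
def IsSelfCancelling {X : Type*} [NormedAddCommGroup X] [NormedSpace ℝ X]
    (A : Set (X × (X →L[ℝ] ℝ))) : Prop :=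
  (∃ S : Submodule ℝ (X × (X →L[ℝ] ℝ)), A = ↑S) ∧ ∀ p ∈ A, p.2 p.1 = 0

/-- The weak topology on `X`: the initial topology induced by all continuous linear
functionals `X → ℝ`. -/
def weakTopology (X : Type*) [NormedAddCommGroup X] [NormedSpace ℝ X] :
    TopologicalSpace X :=
  TopologicalSpace.induced (fun x => fun f : X →L[ℝ] ℝ => f x) Pi.topologicalSpace

/-- The weak-* topology on `X* = X →L[ℝ] ℝ`: the topology of pointwise convergence. -/
def weakStarTopology (X : Type*) [NormedAddCommGroup X] [NormedSpace ℝ X] :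
    TopologicalSpace (X →L[ℝ] ℝ) :=
  TopologicalSpace.induced (fun f => fun x : X => f x) Pi.topologicalSpace

/-!
Write `ω(p, q) = ⟨q₁, p₂⟩ + ⟨p₁, q₂⟩`, so that `B^⊢` is the `ω`-orthogonal of `B` and a linear
subspace is self-cancelling iff it is contained in its own `ω`-orthogonal. Since `ω` is
separately weak × weak-* continuous, `B^⊢` is weak × weak-* closed, and the weak × weak-*
closure of a self-cancelling `A` is again self-cancelling.

The dual of `X × X*` with the strong × weak-* topology consists of the functionals `ω(r, ·)`,
`r ∈ X × X*`. If a self-cancelling `B ⊇ A` had a point `q` outside the strong × weak-* closure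
of `A`, Hahn–Banach would give such an `r` with `r ∈ A^⊢` and `ω(r, q) ≠ 0`. But `q ∈ A^⊢` too,
and `⟨q₁, q₂⟩ = 0`; as `A^⊢` is a monotone subspace, `p ↦ ⟨p₁, p₂⟩` is positive semidefinite
on it, so by Cauchy–Schwarz `ω(r, q) = 0`. Thus every self-cancelling `B ⊇ A` lies in the
strong × weak-* closure, which lies in the weak × weak-* closure; taking for `B` the weak × weak-*
closure gives the equality of the closures, and any `B` containing it gives maximality.
-/

open Topology

theorem Submodule.exists_dual_eq_zero_ne_zero_of_notMem_closure {E : Type*} [AddCommGroup E]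
    [Module ℝ E] [TopologicalSpace E] [IsTopologicalAddGroup E] [ContinuousSMul ℝ E]
    [LocallyConvexSpace ℝ E] (S : Submodule ℝ E) {x : E} (hx : x ∉ closure (S : Set E)) :
    ∃ f : StrongDual ℝ E, (∀ y ∈ S, f y = 0) ∧ f x ≠ 0 := by
  obtain ⟨f, u, hfS, hux⟩ := geometric_hahn_banach_closed_point
    S.topologicalClosure.convex S.isClosed_topologicalClosure
    (by rwa [Submodule.topologicalClosure_coe])
  have hu : 0 < u := by simpa using hfS 0 S.topologicalClosure.zero_mem
  refine ⟨f, fun y hy => ?_, (hu.trans hux).ne'⟩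
  by_contra hfy
  have := hfS ((u / f y) • y) (S.le_topologicalClosure (S.smul_mem _ hy))
  rw [map_smul, smul_eq_mul, div_mul_cancel₀ _ hfy] at this
  exact this.false

section SelfCancelling

variable {X : Type*} [NormedAddCommGroup X] [NormedSpace ℝ X]

theorem vdash_anti {A B : Set (X × (X →L[ℝ] ℝ))} (h : A ⊆ B) : vdash B ⊆ vdash A :=
  fun _ hq p hp => hq p (h hp)

theorem subset_vdash_comm {B C : Set (X × (X →L[ℝ] ℝ))} : B ⊆ vdash C ↔ C ⊆ vdash B := by
  constructor <;> exact fun h q hq p hp => (add_comm _ _).trans (h hp q hq)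

def vdashSubmodule (B : Set (X × (X →L[ℝ] ℝ))) : Submodule ℝ (X × (X →L[ℝ] ℝ)) where
  carrier := vdash B
  add_mem' {q r} hq hr p hp := by
    simp only [Prod.fst_add, Prod.snd_add, map_add, add_apply]
    linear_combination hq p hp + hr p hp
  zero_mem' p _ := by simp
  smul_mem' t q hq p hp := by
    simp only [Prod.smul_fst, Prod.smul_snd, map_smul, smul_apply, smul_eq_mul]
    linear_combination t * hq p hp

theorem IsSelfCancelling.subset_vdash {A : Set (X × (X →L[ℝ] ℝ))} (hA : IsSelfCancelling A) :
    A ⊆ vdash A := by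
  obtain ⟨⟨S, rfl⟩, hS⟩ := hA
  intro q hq p hp
  have hpq := hS (p + q) (S.add_mem hp hq)
  simp only [Prod.fst_add, Prod.snd_add, map_add, add_apply] at hpq
  linear_combination hpq - hS p hp - hS q hq

theorem isSelfCancelling_of_subset_vdash (S : Submodule ℝ (X × (X →L[ℝ] ℝ)))
    (h : (S : Set (X × (X →L[ℝ] ℝ))) ⊆ vdash S) : IsSelfCancelling (S : Set (X × (X →L[ℝ] ℝ))) :=
  ⟨⟨S, rfl⟩, fun p hp => by linarith [h hp p hp]⟩

theorem IsMonotoneSet.apply_self_nonneg {T : Set (X × (X →L[ℝ] ℝ))} (hT : IsMonotoneSet T)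
    (h0 : 0 ∈ T) {p : X × (X →L[ℝ] ℝ)} (hp : p ∈ T) : 0 ≤ p.2 p.1 := by
  simpa using hT p hp 0 h0

/-- Cauchy–Schwarz for the positive semidefinite quadratic form `p ↦ ⟨p₁, p₂⟩` on `V`. -/
theorem apply_add_apply_eq_zero_of_isotropic {V : Submodule ℝ (X × (X →L[ℝ] ℝ))}
    (hV : ∀ r ∈ V, 0 ≤ r.2 r.1) {q r : X × (X →L[ℝ] ℝ)} (hq : q ∈ V) (hqq : q.2 q.1 = 0)
    (hr : r ∈ V) : r.2 q.1 + q.2 r.1 = 0 := by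
  have hquad : ∀ t : ℝ, 0 ≤ r.2 r.1 * (t * t) + (r.2 q.1 + q.2 r.1) * t + 0 := fun t => by
    have := hV _ (V.add_mem hq (V.smul_mem t hr))
    simp only [Prod.fst_add, Prod.snd_add, Prod.smul_fst, Prod.smul_snd, map_add, map_smul,
      add_apply, smul_apply, smul_eq_mul] at this
    linear_combination this + hqq
  have hdiscrim := discrim_le_zero hquad
  rw [discrim] at hdiscrim
  nlinarith [sq_nonneg (r.2 q.1 + q.2 r.1)]

abbrev weakWeakStarTopology (X : Type*) [NormedAddCommGroup X] [NormedSpace ℝ X] :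
    TopologicalSpace (X × (X →L[ℝ] ℝ)) :=
  @instTopologicalSpaceProd _ _ (weakTopology X) (weakStarTopology X)

abbrev strongWeakStarTopology (X : Type*) [NormedAddCommGroup X] [NormedSpace ℝ X] :
    TopologicalSpace (X × (X →L[ℝ] ℝ)) :=
  @instTopologicalSpaceProd _ _ inferInstance (weakStarTopology X)

theorem strongWeakStarTopology_le_weakWeakStarTopology :
    strongWeakStarTopology X ≤ weakWeakStarTopology X :=
  inf_le_inf_right _ <| induced_mono <|
    continuous_iff_le_induced.1 (continuous_pi fun f => f.continuous)

theorem continuous_pairing_weakWeakStar (p : X × (X →L[ℝ] ℝ)) :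
    Continuous[weakWeakStarTopology X, inferInstance] fun q => p.2 q.1 + q.2 p.1 :=
  (((WeakBilin.eval_continuous (topDualPairing ℝ X).flip p.2).comp continuous_fst).add
    ((WeakDual.eval_continuous p.1).comp continuous_snd) :
      Continuous fun q : WeakSpace ℝ X × WeakDual ℝ X => p.2 q.1 + q.2 p.1)

theorem isClosed_vdash (B : Set (X × (X →L[ℝ] ℝ))) :
    IsClosed[weakWeakStarTopology X] (vdash B) := by
  let _ := weakWeakStarTopology X
  have hB : vdash B = ⋂ p ∈ B, {q | p.2 q.1 + q.2 p.1 = 0} := by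
    ext q
    simp only [vdash, Set.mem_ofPred_eq, Set.mem_iInter₂]
  rw [hB]
  exact isClosed_biInter fun p _ => isClosed_eq (continuous_pairing_weakWeakStar p) continuous_const

theorem closure_subset_vdash_closure {A : Set (X × (X →L[ℝ] ℝ))} (hA : A ⊆ vdash A) :
    closure[weakWeakStarTopology X] A ⊆ vdash (closure[weakWeakStarTopology X] A) :=
  letI := weakWeakStarTopology X
  closure_minimal (subset_vdash_comm.1 (closure_minimal hA (isClosed_vdash A))) (isClosed_vdash _)

theorem IsSelfCancelling.weakClosure {A : Set (X × (X →L[ℝ] ℝ))} (hA : IsSelfCancelling A) :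
    IsSelfCancelling (closure[weakWeakStarTopology X] A) := by
  obtain ⟨⟨S, rfl⟩, -⟩ := id hA
  let S' : Submodule ℝ (WeakSpace ℝ X × WeakDual ℝ X) := S
  have hS' : closure[weakWeakStarTopology X] S =
      (S'.topologicalClosure : Set (WeakSpace ℝ X × WeakDual ℝ X)) :=
    S'.topologicalClosure_coe.symm
  rw [hS']
  exact isSelfCancelling_of_subset_vdash (X := X) S'.topologicalClosure
    (hS' ▸ closure_subset_vdash_closure hA.subset_vdash)

instance : LocallyConvexSpace ℝ (WeakDual ℝ X) := WeakBilin.locallyConvexSpace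

theorem StrongDual.exists_apply_prod_weakDual_eq (f : StrongDual ℝ (X × WeakDual ℝ X)) :
    ∃ r : X × (X →L[ℝ] ℝ), ∀ p : X × WeakDual ℝ X, f p = r.2 p.1 + p.2 r.1 := by
  obtain ⟨a, ha⟩ := LinearMap.dualEmbedding_surjective (topDualPairing ℝ X)
    (f.comp (.inr ℝ X (WeakDual ℝ X)))
  refine ⟨(a, f.comp (.inl ℝ X (WeakDual ℝ X))), fun p => ?_⟩
  rw [← f.comp_inl_add_comp_inr]
  exact congrArg _ (DFunLike.congr_fun ha p.2).symm

theorem IsSelfCancelling.subset_closure_of_subset {S : Submodule ℝ (X × (X →L[ℝ] ℝ))}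
    {B : Set (X × (X →L[ℝ] ℝ))} (hB : IsSelfCancelling B)
    (hmono : IsMonotoneSet (vdash (S : Set (X × (X →L[ℝ] ℝ)))))
    (hSB : (S : Set (X × (X →L[ℝ] ℝ))) ⊆ B) : B ⊆ closure[strongWeakStarTopology X] S := by
  intro q hqB
  by_contra hqS
  let S' : Submodule ℝ (X × WeakDual ℝ X) := S
  have hqS' : q ∉ closure (S' : Set (X × WeakDual ℝ X)) := hqS
  obtain ⟨f, hfS, hfq⟩ := S'.exists_dual_eq_zero_ne_zero_of_notMem_closure hqS'
  obtain ⟨r, hf⟩ := StrongDual.exists_apply_prod_weakDual_eq f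
  have hr : r ∈ vdash S := fun p hp => by
    rw [add_comm]; exact (hf p).symm.trans (hfS p hp)
  have hq : q ∈ vdash S := vdash_anti hSB (hB.subset_vdash hqB)
  have hV : ∀ r ∈ vdashSubmodule (S : Set (X × (X →L[ℝ] ℝ))), 0 ≤ r.2 r.1 := fun _ =>
    hmono.apply_self_nonneg (vdashSubmodule _).zero_mem
  exact hfq ((hf q).trans (apply_add_apply_eq_zero_of_isotropic hV hq (hB.2 q hqB) hr))

end SelfCancelling

theorem closure_selfCancelling_maximal_general {X : Type*} [NormedAddCommGroup X]
    [NormedSpace ℝ X] (A : Set (X × (X →L[ℝ] ℝ)))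
    (hA : IsSelfCancelling A) (hmono : IsMonotoneSet (vdash A)) :
    @closure _ (@instTopologicalSpaceProd _ _ (weakTopology X) (weakStarTopology X)) A =
      @closure _ (@instTopologicalSpaceProd _ _ inferInstance (weakStarTopology X)) A ∧
    IsSelfCancelling
      (@closure _ (@instTopologicalSpaceProd _ _ (weakTopology X) (weakStarTopology X)) A) ∧
    ∀ B, IsSelfCancelling B →
      (@closure _ (@instTopologicalSpaceProd _ _ (weakTopology X) (weakStarTopology X)) A) ⊆ B →
      B = @closure _ (@instTopologicalSpaceProd _ _ (weakTopology X) (weakStarTopology X)) A := by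
  obtain ⟨⟨S, rfl⟩, -⟩ := id hA
  have hcl := hA.weakClosure
  have hsw : closure[strongWeakStarTopology X] S ⊆ closure[weakWeakStarTopology X] S :=
    closure.mono strongWeakStarTopology_le_weakWeakStarTopology
  have hsub : (S : Set (X × (X →L[ℝ] ℝ))) ⊆ closure[weakWeakStarTopology X] S :=
    @subset_closure _ (weakWeakStarTopology X) S
  refine ⟨(hcl.subset_closure_of_subset hmono hsub).antisymm hsw, hcl,
    fun B (hB : IsSelfCancelling B) hclB => ?_⟩
  exact ((hB.subset_closure_of_subset hmono (hsub.trans hclB)).trans hsw).antisymm hclB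

/-- If `A ⊆ X × X*` is self-cancelling and `A^⊢` is monotone, then the closure of `A`
in the weak × weak-* topology coincides with its closure in the strong × weak-*
topology, and this common closure is a maximal self-cancelling subset of `X × X*`. -/
theorem closure_selfCancelling_maximal {X : Type*} [NormedAddCommGroup X]
    [NormedSpace ℝ X] [CompleteSpace X] (A : Set (X × (X →L[ℝ] ℝ)))
    (hA : IsSelfCancelling A) (hmono : IsMonotoneSet (vdash A)) :
    @closure _ (@instTopologicalSpaceProd _ _ (weakTopology X) (weakStarTopology X)) A =
      @closure _ (@instTopologicalSpaceProd _ _ inferInstance (weakStarTopology X)) A ∧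
    IsSelfCancelling
      (@closure _ (@instTopologicalSpaceProd _ _ (weakTopology X) (weakStarTopology X)) A) ∧
    ∀ B, IsSelfCancelling B →
      (@closure _ (@instTopologicalSpaceProd _ _ (weakTopology X) (weakStarTopology X)) A) ⊆ B →
      B = @closure _ (@instTopologicalSpaceProd _ _ (weakTopology X) (weakStarTopology X)) A :=
  closure_selfCancelling_maximal_general A hA hmono
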